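/- arXiv:0906.1182 — 2 statements merged into one kernel-verified Lean document; each statement's English description precedes it below -/
import Mathlib

section
/- Let L be a first-order language having at least one constant symbol and infinitely many unary function symbols. Let V be a finite set of variables and let (x_1,t_1),...,(x_n,t_n) be finitely many pairs where each x_j is a variable in V and each t_j is an L-term with variables in V such that t_j is not the variable term x_j itself. Then there exists a substitution σ assigning to every variable in V a closed L-term such that, for every j, σ(x_j) is different from the term t_jσ obtained from t_j by replacing every occurrence of each variable v by σ(v). -/
open FirstOrder Language

namespace CIFFHelper

variable {L : FirstOrder.Language} {V : Type*}

/-- The set of function symbols occurring in a term. -/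
def occ : L.Term V → Set (Σ n, L.Functions n)
  | .var _ => ∅
  | .func (l := m) F ts => insert ⟨m, F⟩ (⋃ i, occ (ts i))

lemma occ_finite (s : L.Term V) : (occ s).Finite := by
  induction s with
  | var v => simp [occ]
  | func F ts ih => exact Set.Finite.insert _ (Set.finite_iUnion ih)

end CIFFHelper

/-- Satisfiability, over the Herbrand universe, of a finite set of disequalities
`x_j ≠ t_j`: given a first-order language with at least one constant symbol and
infinitely many unary function symbols, a finite set of variables `V`, and
finitely many pairs `(x_j, t_j)` where `t_j` is not the variable term `x_j`,
there is a substitution by closed terms making all the disequalities true. -/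
theorem stmt_0 (L : FirstOrder.Language) [Nonempty L.Constants]
    [Infinite (L.Functions 1)] (V : Type) [Finite V]
    (n : ℕ) (x : Fin n → V) (t : Fin n → L.Term V)
    (ht : ∀ j, t j ≠ FirstOrder.Language.Term.var (x j)) :
    ∃ σ : V → L.Term Empty, ∀ j, σ (x j) ≠ (t j).subst σ := by
  obtain ⟨c⟩ := ‹Nonempty L.Constants›
  -- the finite set of "used" unary function symbols
  set S : Set (L.Functions 1) :=
    ⋃ j, (Sigma.mk 1) ⁻¹' (CIFFHelper.occ (t j)) with hSdef
  have hS : S.Finite := by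
    apply Set.finite_iUnion
    intro j
    exact Set.Finite.preimage (sigma_mk_injective.injOn) (CIFFHelper.occ_finite (t j))
  have hScompl : Infinite (↥(Sᶜ)) := by
    rw [Set.infinite_coe_iff]
    exact hS.infinite_compl
  -- an injection from V into the fresh unary function symbols
  obtain ⟨m, ⟨e⟩⟩ := Finite.exists_equiv_fin V
  let emb : V ↪ ↥(Sᶜ) :=
    (e.toEmbedding.trans Fin.valEmbedding).trans (Infinite.natEmbedding _)
  let g : V → L.Functions 1 := fun v => (emb v : L.Functions 1)
  have hginj : Function.Injective g := fun a b hab =>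
    emb.injective (Subtype.ext hab)
  have hgS : ∀ v, g v ∉ S := fun v => (emb v).2
  refine ⟨fun v => Term.func (g v) (fun _ => c.term), fun j h => ?_⟩
  cases htj : t j with
  | var y =>
    rw [htj] at h
    simp only [Term.subst] at h
    injection h with h1 h2 h3
    exact (ht j) (htj.trans (by rw [hginj h2]))
  | @func m F ts =>
    rw [htj] at h
    simp only [Term.subst] at h
    injection h with h1 h2 h3
    subst h1
    have hFocc : (⟨1, F⟩ : Σ k, L.Functions k) ∈ CIFFHelper.occ (t j) := by
      rw [htj, CIFFHelper.occ]
      exact Set.mem_insert _ _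
    have : F ∈ S := Set.mem_iUnion.2 ⟨j, hFocc⟩
    rw [← eq_of_heq h2] at this
    exact hgS _ this
end

section
/- Let α and β be types, let t : β → α be an injective function, and let B, H : α → β → Prop. Then (∃ X, ∀ Y, (X = t Y ∧ B X Y) → H X Y) holds if and only if ((∃ X, ∃ Y, X = t Y ∧ (B X Y → H X Y)) ∨ (∃ X, ∀ Y, X ≠ t Y)) holds. -/
/-- The equivalence underlying the CIFF `Case analysis for equalities` rule (R12):
`F1 = ∃X ∀Y ((X = t ∧ B) → H)` is equivalent to
`F2 = [∃X,Y (X = t ∧ (B → H))] ∨ [∃X ∀Y (X = t → ⊥)]`. -/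
theorem stmt_1 {α β : Type*} (t : β → α) (ht : Function.Injective t)
    (B H : α → β → Prop) :
    (∃ X, ∀ Y, (X = t Y ∧ B X Y) → H X Y) ↔
      ((∃ X, ∃ Y, X = t Y ∧ (B X Y → H X Y)) ∨ (∃ X, ∀ Y, X ≠ t Y)) := by
  constructor
  · rintro ⟨X, hX⟩
    by_cases h : ∃ Y, X = t Y
    · obtain ⟨Y, hY⟩ := h
      exact Or.inl ⟨X, Y, hY, fun hB => hX Y ⟨hY, hB⟩⟩
    · exact Or.inr ⟨X, fun Y hY => h ⟨Y, hY⟩⟩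
  · rintro (⟨X, Y, hXY, hBH⟩ | ⟨X, hX⟩)
    · exact ⟨X, fun Y' ⟨hXY', hB⟩ => by
        obtain rfl := ht (hXY ▸ hXY'); exact hBH hB⟩
    · exact ⟨X, fun Y ⟨hXY, _⟩ => absurd hXY (hX Y)⟩
end
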